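/- Let R be an integral domain that is a finitely generated ℂ-algebra, a unique factorization domain, and has Krull dimension 3. Let D : Derivation ℂ R R be a nonzero locally nilpotent derivation (for every r ∈ R there exists n ∈ ℕ with D^[n] r = 0), and let A = ker D = {r ∈ R | D r = 0} be the invariant subalgebra. Then for every maximal ideal m of the ring A, the Krull dimension of the quotient ring R ⧸ (m · R) is at most 1, where m · R denotes the ideal of R generated by the image of m under the inclusion A → R. -/

import Mathlib

/-!
Suppose `R ⧸ mR` had a chain of primes of length two; it lifts to primes `P₀ < P₁ < P₂` of `R`
containing `mR`, all contracting to `m` in `A`. Take `f ∈ P₂ \ P₁` and `g ∈ P₁ \ P₀`. Reading a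
polynomial relation over `A` between `f` and `g` modulo `P₁` and then modulo `P₀` puts all its
coefficients in `m`. If `m ≠ 0`, then `P₀` has height one because `dim R = 3`, so `P₀ = qR` for a
prime `q`, which lies in `A` because `A = ker D` is factorially closed; then `m ⊆ qA`, every
relation is divisible by `q`, and unique factorization leaves only the zero relation. Hence `f` and
`g` are algebraically independent over `A`. But for `r` with `D r ≠ 0 = D² r` every element of `R`
times a power of `D r` lies in `A[r]`, so `R` has transcendence degree at most one over `A`.
-/

open Polynomial

namespace Polynomial

variable {B R : Type*} [CommRing B] [CommRing R]

theorem coeff_iterate_divX (p : B[X]) (i n : ℕ) : (divX^[i] p).coeff n = p.coeff (n + i) := by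
  induction i generalizing n with
  | zero => rfl
  | succ i ih =>
    rw [Function.iterate_succ_apply', coeff_divX, ih]
    congr 1
    omega

theorem coeff_mem_comap_of_eval₂_mem (φ : B →+* R) {Q P : Ideal R} [Q.IsPrime] (hQP : Q ≤ P)
    (hPQ : P.comap φ ≤ Q.comap φ) {x : R} (hxP : x ∈ P) (hxQ : x ∉ Q) {p : B[X]}
    (hp : p.eval₂ φ x ∈ Q) (i : ℕ) : p.coeff i ∈ Q.comap φ := by
  have hstep : ∀ v : B[X], v.eval₂ φ x ∈ Q → v.coeff 0 ∈ Q.comap φ ∧ v.divX.eval₂ φ x ∈ Q := by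
    intro v hv
    have hsplit : v.eval₂ φ x = v.divX.eval₂ φ x * x + φ (v.coeff 0) := by
      conv_lhs => rw [← divX_mul_X_add v]
      simp
    have h0 : v.coeff 0 ∈ Q.comap φ := hPQ <| Ideal.mem_comap.2 <| by
      rw [eq_sub_of_add_eq' hsplit.symm]
      exact P.sub_mem (hQP hv) (P.mul_mem_left _ hxP)
    refine ⟨h0, (Ideal.IsPrime.mem_or_mem ‹_› ?_).resolve_right hxQ⟩
    rw [eq_sub_of_add_eq hsplit.symm]
    exact Q.sub_mem hv h0
  have hiter : ∀ j, (divX^[j] p).eval₂ φ x ∈ Q := by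
    intro j
    induction j with
    | zero => exact hp
    | succ j ih => rw [Function.iterate_succ_apply']; exact (hstep _ ih).2
  simpa [coeff_iterate_divX] using (hstep _ (hiter i)).1

theorem transcendental_of_forall_coeff_mem_span [Algebra B R] [NoZeroDivisors R]
    (hinj : Function.Injective (algebraMap B R)) {q : B}
    (hq : ∀ s : R, (∀ n, algebraMap B R q ^ n ∣ s) → s = 0) {x : R}
    (h : ∀ p : B[X], aeval x p = 0 → ∀ i, p.coeff i ∈ Ideal.span {q}) : Transcendental B x := by
  rintro ⟨p, hp0, hpx⟩
  by_cases hq0 : q = 0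
  · refine hp0 (ext fun i => ?_)
    simpa [hq0] using h p hpx i
  -- Dividing a relation by `q` gives a relation again, so `q ^ n` divides every relation.
  have hdvd : ∀ n, ∀ p : B[X], aeval x p = 0 → C (q ^ n) ∣ p := by
    intro n
    induction n with
    | zero => simp
    | succ n ih =>
      intro p hp
      obtain ⟨p', rfl⟩ := (C_dvd_iff_dvd_coeff q p).2 fun i =>
        Ideal.mem_span_singleton.1 (h p hp i)
      rw [map_mul, aeval_C] at hp
      have hp' := (mul_eq_zero.1 hp).resolve_left ((map_ne_zero_iff _ hinj).2 hq0)
      rw [pow_succ', C_mul]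
      exact mul_dvd_mul_left _ (ih p' hp')
  obtain ⟨i, hi⟩ : ∃ i, p.coeff i ≠ 0 := by
    by_contra! h0
    exact hp0 (ext fun i => by simpa using h0 i)
  refine hi (hinj ?_)
  rw [map_zero]
  refine hq _ fun n => ?_
  rw [← map_pow]
  exact _root_.map_dvd (algebraMap B R) ((C_dvd_iff_dvd_coeff _ p).1 (hdvd n p hpx) i)

end Polynomial

section ChainOfPrimes

-- `hq` and `hq₂` say that `P₀ ≤ P₁ ≤ P₂` all contract to one ideal of `A`, contained in `qA`.
variable {A R : Type*} [CommRing A] [CommRing R] [Algebra A R] {P₀ P₁ P₂ : Ideal R} {q : A}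
  (hq : algebraMap A R q ∈ P₀) (hq₂ : P₂.comap (algebraMap A R) ≤ Ideal.span {q})
  (h01 : P₀ ≤ P₁) (h12 : P₁ ≤ P₂) {f : R} (hf₂ : f ∈ P₂) (hf₁ : f ∉ P₁)
include hq hq₂ h01 h12 hf₂ hf₁

theorem coeff_mem_span_of_aeval_mem [P₁.IsPrime] {p : A[X]} (hp : aeval f p ∈ P₁) (i : ℕ) :
    p.coeff i ∈ Ideal.span {q} := by
  have hcomap : P₂.comap (algebraMap A R) ≤ P₁.comap (algebraMap A R) :=
    hq₂.trans ((Ideal.span_singleton_le_iff_mem _).2 (h01 hq))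
  exact hq₂ (Ideal.comap_mono h12
    (coeff_mem_comap_of_eval₂_mem (algebraMap A R) h12 hcomap hf₂ hf₁ hp i))

theorem mem_span_of_mem_adjoin [P₁.IsPrime] {c : Algebra.adjoin A {f}} (hc : (c : R) ∈ P₁) :
    c ∈ Ideal.span {algebraMap A (Algebra.adjoin A {f}) q} := by
  obtain ⟨p, hp⟩ := (aeval f : A[X] →ₐ[A] R).mem_range.1 <| by
    rw [← Algebra.adjoin_singleton_eq_range_aeval]; exact c.2
  obtain ⟨p', rfl⟩ := (C_dvd_iff_dvd_coeff q p).2 fun i =>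
    Ideal.mem_span_singleton.1 (coeff_mem_span_of_aeval_mem hq hq₂ h01 h12 hf₂ hf₁ (hp ▸ hc) i)
  refine Ideal.mem_span_singleton'.2
    ⟨⟨aeval f p', p'.aeval_mem_adjoin_singleton A f⟩, Subtype.ext ?_⟩
  rw [← hp, map_mul, aeval_C, mul_comm]
  rfl

theorem two_le_trdeg_of_mem_of_not_mem [IsDomain R] [P₀.IsPrime] [P₁.IsPrime]
    (hinj : Function.Injective (algebraMap A R))
    (hsep : ∀ s : R, (∀ n, algebraMap A R q ^ n ∣ s) → s = 0)
    {g : R} (hg₁ : g ∈ P₁) (hg₀ : g ∉ P₀) : 2 ≤ Algebra.trdeg A R := by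
  have : Nontrivial A := (algebraMap A R).domain_nontrivial
  set B := Algebra.adjoin A {f}
  have hf : Transcendental A f :=
    transcendental_of_forall_coeff_mem_span hinj hsep fun p hp =>
      coeff_mem_span_of_aeval_mem hq hq₂ h01 h12 hf₂ hf₁ (hp ▸ P₁.zero_mem)
  have hcomap : P₁.comap (algebraMap B R) ≤ P₀.comap (algebraMap B R) := fun c hc => by
    obtain ⟨a, rfl⟩ :=
      Ideal.mem_span_singleton'.1 (mem_span_of_mem_adjoin hq hq₂ h01 h12 hf₂ hf₁ hc)
    exact Ideal.mul_mem_left _ _ hq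
  have hg : Transcendental B g := by
    refine transcendental_of_forall_coeff_mem_span (q := algebraMap A B q) Subtype.val_injective
      (by simpa [← IsScalarTower.algebraMap_apply] using hsep) fun p hp i => ?_
    refine mem_span_of_mem_adjoin hq hq₂ h01 h12 hf₂ hf₁ (h01 ?_)
    exact coeff_mem_comap_of_eval₂_mem (algebraMap B R) h01 hcomap hg₁ hg₀
      (by rw [← aeval_def, hp]; exact P₀.zero_mem) i
  have hind : AlgebraicIndependent A (fun o : Option PUnit => o.elim g fun _ => f) :=
    AlgebraicIndependent.option_iff.2
      ⟨algebraicIndependent_unique_type_iff.2 hf, by rw [Set.range_const]; exact hg⟩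
  simpa using hind.cardinalMk_le_trdeg

end ChainOfPrimes

theorem Ideal.height_le_one_of_lt_of_lt {R : Type*} [CommRing R] (hdim : ringKrullDim R ≤ 3)
    {P₀ P₁ P₂ : Ideal R} [P₀.IsPrime] [P₁.IsPrime] [P₂.IsPrime] (h01 : P₀ < P₁) (h12 : P₁ < P₂) :
    P₀.height ≤ 1 := by
  have h : P₀.height + 1 + 1 ≤ 3 := by
    have h₂ : (P₂.height : WithBot ℕ∞) ≤ (3 : ℕ∞) :=
      Ideal.height_le_ringKrullDim_of_isPrime.trans hdim
    calc P₀.height + 1 + 1 ≤ P₁.height + 1 := by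
          gcongr; exact height_add_one_le_of_lt_of_isPrime h01
      _ ≤ P₂.height := height_add_one_le_of_lt_of_isPrime h12
      _ ≤ 3 := WithBot.coe_le_coe.1 h₂
  generalize P₀.height = h₀ at h ⊢
  induction h₀ using ENat.recTopCoe with
  | top => simp at h
  | coe n => norm_cast at h ⊢; omega

theorem eq_zero_of_forall_pow_dvd {R : Type*} [CommMonoidWithZero R] [IsCancelMulZero R]
    [WfDvdMonoid R] {q s : R} (hq : ¬IsUnit q) (h : ∀ n, q ^ n ∣ s) : s = 0 := by
  by_contra hs
  obtain ⟨n, hn⟩ := FiniteMultiplicity.of_not_isUnit hq hs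
  exact hn (h _)

namespace Derivation

section LocallyNilpotent

open Finset

variable {k R : Type*} [CommRing k] [CommRing R] [Algebra k R] (D : Derivation k R R)

theorem iterate_apply_mul (n : ℕ) (a b : R) :
    D^[n] (a * b) = ∑ ij ∈ antidiagonal n, n.choose ij.1 • (D^[ij.1] a * D^[ij.2] b) := by
  induction n with
  | zero => simp
  | succ n ih =>
    rw [Finset.sum_antidiagonal_choose_succ_nsmul (fun i j => D^[i] a * D^[j] b) n]
    simp only [Function.iterate_succ_apply', ih, map_sum, map_nsmul, leibniz, smul_eq_mul,
      smul_add, Finset.sum_add_distrib]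
    congr 1
    refine sum_congr rfl fun ij hij => ?_
    rw [n.choose_symm_of_eq_add (HasAntidiagonal.mem_antidiagonal.1 hij).symm, mul_comm]

theorem iterate_eq_zero_of_le {x : R} {n m : ℕ} (h : D^[n] x = 0) (hnm : n ≤ m) :
    D^[m] x = 0 := by
  obtain ⟨j, rfl⟩ := Nat.exists_eq_add_of_le hnm
  rw [add_comm, Function.iterate_add_apply, h, Function.iterate_fixed (map_zero D)]

theorem exists_iterate_ne_zero_of_iterate_eq_zero {x : R} (hx : x ≠ 0) {N : ℕ}
    (hN : D^[N] x = 0) : ∃ i, D^[i] x ≠ 0 ∧ D^[i + 1] x = 0 := by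
  induction N generalizing x with
  | zero => exact absurd hN hx
  | succ N ih =>
    by_cases hDx : D x = 0
    · exact ⟨0, hx, hDx⟩
    · obtain ⟨i, hi, hi'⟩ := ih hDx hN
      exact ⟨i + 1, hi, hi'⟩

theorem apply_eq_zero_of_apply_mul_eq_zero [IsDomain R] [CharZero R]
    (hD : ∀ r, ∃ n, D^[n] r = 0) {x y : R} (hxy : x * y ≠ 0) (h : D (x * y) = 0) :
    D x = 0 := by
  by_contra hDx
  obtain ⟨i, hi, hi'⟩ := D.exists_iterate_ne_zero_of_iterate_eq_zero (left_ne_zero_of_mul hxy)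
    (hD x).choose_spec
  obtain ⟨j, hj, hj'⟩ := D.exists_iterate_ne_zero_of_iterate_eq_zero (right_ne_zero_of_mul hxy)
    (hD y).choose_spec
  have hi0 : i ≠ 0 := by rintro rfl; exact hDx hi'
  -- In the Leibniz expansion of `D^[i+j] (x * y)` only the term `(i, j)` survives.
  have hsingle : D^[i + j] (x * y) = (i + j).choose i • (D^[i] x * D^[j] y) := by
    rw [iterate_apply_mul]
    refine sum_eq_single_of_mem (i, j) (HasAntidiagonal.mem_antidiagonal.2 rfl) fun ab hab hne => ?_
    rw [HasAntidiagonal.mem_antidiagonal] at hab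
    rcases lt_or_gt_of_ne (fun h : ab.1 = i => hne (Prod.ext h (by omega))) with h | h
    · rw [D.iterate_eq_zero_of_le hj' (by omega : j + 1 ≤ ab.2), mul_zero, smul_zero]
    · rw [D.iterate_eq_zero_of_le hi' (by omega : i + 1 ≤ ab.1), zero_mul, smul_zero]
  have hzero : D^[i + j] (x * y) = 0 := D.iterate_eq_zero_of_le (n := 1) h (by omega)
  rw [hsingle, nsmul_eq_mul] at hzero
  exact mul_ne_zero (Nat.cast_ne_zero.2 (Nat.choose_pos (Nat.le_add_right i j)).ne')
    (mul_ne_zero hi hj) hzero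

theorem exists_apply_ne_zero_and_apply_apply_eq_zero (hD : ∀ r, ∃ n, D^[n] r = 0) (hD0 : D ≠ 0) :
    ∃ r, D r ≠ 0 ∧ D (D r) = 0 := by
  obtain ⟨x, hx⟩ : ∃ x, D x ≠ 0 := by
    by_contra! h
    exact hD0 (ext h)
  obtain ⟨N, hN⟩ := hD (D x)
  obtain ⟨i, hi, hi'⟩ := D.exists_iterate_ne_zero_of_iterate_eq_zero hx hN
  have hcomm := Function.Commute.self_iterate D i x
  exact ⟨D^[i] x, by rwa [hcomm], by rwa [hcomm, ← Function.iterate_succ_apply' (f := D)]⟩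

end LocallyNilpotent

section Slice

variable {k R : Type*} [Field k] [CharZero k] [CommRing R] [Algebra k R] {D : Derivation k R R}
  {A : Subalgebra k R} (hA : ∀ r, r ∈ A ↔ D r = 0)
include hA

theorem exists_apply_eq_mul_of_mem_adjoin {r y : R}
    (hy : y ∈ Algebra.adjoin A {r}) : ∃ z ∈ Algebra.adjoin A {r}, D z = D r * y := by
  rw [Algebra.adjoin_singleton_eq_range_aeval] at hy ⊢
  obtain ⟨p, rfl⟩ := hy
  induction p using Polynomial.induction_on' with
  | add p q hp hq =>
    obtain ⟨z, hz, hDz⟩ := hp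
    obtain ⟨w, hw, hDw⟩ := hq
    exact ⟨z + w, add_mem hz hw, by rw [map_add, hDz, hDw, map_add, mul_add]⟩
  | monomial n c =>
    -- an antiderivative of `c r ^ n` with respect to `D r`
    set c' : A := ((n + 1 : ℕ) : k)⁻¹ • c
    refine ⟨aeval r (monomial (n + 1) c'), ⟨_, rfl⟩, ?_⟩
    have hc' : D (algebraMap A R c') = 0 := (hA _).1 c'.2
    have hn : ((n + 1 : ℕ) : k) ≠ 0 := Nat.cast_ne_zero.2 n.succ_ne_zero
    rw [aeval_monomial, AlgHom.toRingHom_eq_coe, RingHom.coe_coe, aeval_monomial, leibniz, hc',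
      smul_zero, add_zero, leibniz_pow, Nat.add_sub_cancel, ← Nat.cast_smul_eq_nsmul k,
      show algebraMap A R c' = ((n + 1 : ℕ) : k)⁻¹ • (c : R) from rfl, smul_eq_mul,
      smul_mul_smul_comm, inv_mul_cancel₀ hn, one_smul]
    change (c : R) * (r ^ n * D r) = D r * ((c : R) * r ^ n)
    ring

theorem exists_pow_mul_mem_adjoin (hD : ∀ r, ∃ n, D^[n] r = 0) {r : R} (hr : D (D r) = 0)
    (x : R) : ∃ n, D r ^ n * x ∈ Algebra.adjoin A {r} := by
  obtain ⟨N, hN⟩ := hD x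
  induction N generalizing x with
  | zero => exact ⟨0, by rw [show x = 0 from hN, mul_zero]; exact zero_mem _⟩
  | succ N ih =>
    obtain ⟨n, hn⟩ := ih (D x) (by rwa [← Function.iterate_succ_apply])
    obtain ⟨z, hz, hDz⟩ := exists_apply_eq_mul_of_mem_adjoin hA hn
    have hker : D r ^ (n + 1) * x - z ∈ A := by
      rw [hA, map_sub, hDz, leibniz, leibniz_pow, hr]
      simp only [smul_eq_mul]
      ring
    refine ⟨n + 1, ?_⟩
    simpa using add_mem (Subalgebra.algebraMap_mem (Algebra.adjoin A {r}) (⟨_, hker⟩ : A)) hz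

theorem trdeg_le_one [IsDomain R] (hD : ∀ r, ∃ n, D^[n] r = 0) (hD0 : D ≠ 0) :
    Algebra.trdeg A R ≤ 1 := by
  obtain ⟨r, hr0, hr⟩ := D.exists_apply_ne_zero_and_apply_apply_eq_zero hD hD0
  have hrA : D r ∈ Algebra.adjoin A {r} :=
    Subalgebra.algebraMap_mem (Algebra.adjoin A {r}) (⟨D r, (hA _).2 hr⟩ : A)
  have : Algebra.IsAlgebraic (Algebra.adjoin A {r}) R := by
    refine ⟨fun x => ?_⟩
    obtain ⟨n, hn⟩ := exists_pow_mul_mem_adjoin hA hD hr x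
    exact IsAlgebraic.of_mul (mem_nonZeroDivisors_of_ne_zero (pow_ne_zero n hr0))
      (isAlgebraic_algebraMap (⟨_, pow_mem hrA n⟩ : Algebra.adjoin A {r}))
      (isAlgebraic_algebraMap (⟨_, hn⟩ : Algebra.adjoin A {r}))
  simpa using Algebra.IsAlgebraic.trdeg_le_cardinalMk A {r}

end Slice

section Fibers

variable {k R : Type*} [Field k] [CharZero k] [CommRing R] [IsDomain R]
  [UniqueFactorizationMonoid R] [Algebra k R] {D : Derivation k R R} {A : Subalgebra k R}
  (hA : ∀ r, r ∈ A ↔ D r = 0)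
include hA

theorem exists_comap_le_span_singleton (hdim : ringKrullDim R ≤ 3) (hD : ∀ r, ∃ n, D^[n] r = 0)
    {m : Ideal A} [m.IsMaximal] {P₀ P₁ P₂ : Ideal R} [P₀.IsPrime] [P₁.IsPrime] [P₂.IsPrime]
    (h01 : P₀ < P₁) (h12 : P₁ < P₂) (hm : m.map (algebraMap A R) ≤ P₀) :
    ∃ q : A, ¬IsUnit (q : R) ∧ algebraMap A R q ∈ P₀ ∧
      P₂.comap (algebraMap A R) ≤ Ideal.span {q} := by
  have : CharZero R := charZero_of_injective_algebraMap (algebraMap k R).injective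
  have hm₂ : P₂.comap (algebraMap A R) = m :=
    (Ideal.IsMaximal.eq_of_le ‹_› (Ideal.comap_ne_top _ (Ideal.IsPrime.ne_top ‹_›))
      (Ideal.map_le_iff_le_comap.1 (hm.trans (h01.le.trans h12.le)))).symm
  rw [hm₂]
  rcases eq_or_ne m ⊥ with rfl | hm0
  · exact ⟨0, by simp, by simp, bot_le⟩
  obtain ⟨x, hxm, hx0⟩ := Submodule.exists_mem_ne_zero_of_ne_bot hm0
  have hxP₀ : (x : R) ∈ P₀ := hm (Ideal.mem_map_of_mem _ hxm)
  have hx0' : (x : R) ≠ 0 := by simpa using hx0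
  have hP₀0 : P₀ ≠ ⊥ := fun h => hx0' (by simpa [h] using hxP₀)
  obtain ⟨q, hqP₀, hq⟩ := Ideal.IsPrime.exists_mem_prime_of_ne_bot ‹_› hP₀0
  have hP₀q : P₀ = Ideal.span {q} := Ideal.eq_span_singleton_of_height_eq_one
    (le_antisymm (Ideal.height_le_one_of_lt_of_lt hdim h01 h12)
      (Order.one_le_iff_ne_zero.2 (mt Ideal.height_eq_zero_iff_eq_bot.1 hP₀0))) hqP₀ hq
  have hqA : q ∈ A := by
    obtain ⟨y, hy⟩ := Ideal.mem_span_singleton'.1 (hP₀q ▸ hxP₀)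
    refine (hA q).2 (D.apply_eq_zero_of_apply_mul_eq_zero hD (y := y) ?_ ?_) <;> rw [mul_comm, hy]
    · exact hx0'
    · exact (hA _).1 x.2
  refine ⟨⟨q, hqA⟩, hq.not_isUnit, hqP₀, fun c hc => ?_⟩
  obtain ⟨y, hy⟩ := Ideal.mem_span_singleton'.1 (hP₀q ▸ hm (Ideal.mem_map_of_mem _ hc))
  have hDy : D (y * q) = 0 := by rw [hy]; exact (hA _).1 c.2
  rw [leibniz, (hA q).1 hqA, smul_zero, zero_add, smul_eq_mul] at hDy
  have hyA : y ∈ A := (hA y).2 ((mul_eq_zero.1 hDy).resolve_left hq.ne_zero)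
  exact Ideal.mem_span_singleton'.2 ⟨⟨y, hyA⟩, Subtype.ext hy⟩

theorem not_lt_and_lt_of_map_le (hdim : ringKrullDim R ≤ 3) (hD : ∀ r, ∃ n, D^[n] r = 0)
    (hD0 : D ≠ 0) {m : Ideal A} [m.IsMaximal] {P₀ P₁ P₂ : Ideal R} [P₀.IsPrime] [P₁.IsPrime]
    [P₂.IsPrime] (hm : m.map (algebraMap A R) ≤ P₀) : ¬(P₀ < P₁ ∧ P₁ < P₂) := by
  rintro ⟨h01, h12⟩
  obtain ⟨q, hq, hqP₀, hq₂⟩ := exists_comap_le_span_singleton hA hdim hD h01 h12 hm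
  obtain ⟨f, hf₂, hf₁⟩ := SetLike.exists_of_lt h12
  obtain ⟨g, hg₁, hg₀⟩ := SetLike.exists_of_lt h01
  have h2 := two_le_trdeg_of_mem_of_not_mem hqP₀ hq₂ h01.le h12.le hf₂ hf₁ Subtype.val_injective
    (fun s hs => eq_zero_of_forall_pow_dvd hq hs) hg₁ hg₀
  exact absurd (h2.trans (trdeg_le_one hA hD hD0)) (by norm_num)

end Fibers

end Derivation

theorem fibers_of_quotient_morphism_are_at_most_curves_general
    (R : Type*) [CommRing R] [IsDomain R] [Algebra ℂ R]
    [UniqueFactorizationMonoid R]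
    (hdim : ringKrullDim R = 3)
    (D : Derivation ℂ R R) (hD : D ≠ 0)
    (hln : ∀ r : R, ∃ n : ℕ, (⇑D)^[n] r = 0)
    (A : Subalgebra ℂ R) (hA : ∀ r : R, r ∈ A ↔ D r = 0) :
    ∀ m : Ideal A, m.IsMaximal →
      ringKrullDim (R ⧸ Ideal.map (algebraMap A R) m) ≤ 1 := by
  intro m hm
  rw [ringKrullDim_quotient, Order.krullDim_le_one_iff]
  rintro ⟨P₁, hP₁⟩
  by_contra! h
  obtain ⟨⟨P₀, hP₀⟩, h01⟩ := not_isMin_iff.1 h.1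
  obtain ⟨⟨P₂, _⟩, h12⟩ := not_isMax_iff.1 h.2
  exact Derivation.not_lt_and_lt_of_map_le (P₁ := P₁.asIdeal) (P₂ := P₂.asIdeal) hA hdim.le hln hD
    ((PrimeSpectrum.mem_zeroLocus _ _).1 hP₀) ⟨h01, h12⟩

/-- **Lemma 2.1** (fibers of the quotient morphism are at most curves): if `R` is a
factorial affine `ℂ`-algebra of dimension 3 with a nonzero locally nilpotent derivation
`D` and invariant subalgebra `A = ker D`, then for every maximal ideal `m` of `A` the
fiber ring `R ⧸ mR` has Krull dimension at most 1. -/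
theorem fibers_of_quotient_morphism_are_at_most_curves
    (R : Type*) [CommRing R] [IsDomain R] [Algebra ℂ R]
    [Algebra.FiniteType ℂ R] [UniqueFactorizationMonoid R]
    (hdim : ringKrullDim R = 3)
    (D : Derivation ℂ R R) (hD : D ≠ 0)
    (hln : ∀ r : R, ∃ n : ℕ, (⇑D)^[n] r = 0)
    (A : Subalgebra ℂ R) (hA : ∀ r : R, r ∈ A ↔ D r = 0) :
    ∀ m : Ideal A, m.IsMaximal →
      ringKrullDim (R ⧸ Ideal.map (algebraMap A R) m) ≤ 1 :=
  fibers_of_quotient_morphism_are_at_most_curves_general R hdim D hD hln A hA
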